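/- Let (G_k,y) be a weakly reversible mass-action system and G_ℰ=(V,ℰ) an auxiliary digraph whose connected components are directed trees on the vertex sets of the strongly connected components of G. Then x ∈ ℝ^n_{>0} is a complex-balanced equilibrium, i.e. A_k x^Y = 0, if and only if x satisfies the binomial equations x^{y(i')}/(K_k)_{i'} − x^{y(i)}/(K_k)_i = 0 for all (i→i') ∈ ℰ. -/

import Mathlib

open Matrix BigOperators Finset

variable {V : Type*}

/-- Directed reachability in the digraph with edge set `F`. -/
def dReach (F : Finset (V × V)) : V → V → Prop :=
  Relation.ReflTransGen fun a b => (a, b) ∈ F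

/-- Reachability in the underlying undirected graph of the digraph with edge set `F`. -/
def uReach (F : Finset (V × V)) : V → V → Prop :=
  Relation.ReflTransGen fun a b => (a, b) ∈ F ∨ (b, a) ∈ F

/-- A digraph is strongly connected if every vertex reaches every other vertex. -/
def StronglyConnected (F : Finset (V × V)) : Prop :=
  ∀ i j : V, dReach F i j

/-- A simple digraph has no self-loops. -/
def NoSelfLoops (F : Finset (V × V)) : Prop :=
  ∀ e ∈ F, e.1 ≠ e.2

/-- The edge set `F` contains a directed cycle. -/
def HasDirectedCycle (F : Finset (V × V)) : Prop :=
  ∃ v : V, Relation.TransGen (fun a b => (a, b) ∈ F) v v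

/-- The Laplacian matrix `A_k` of the labeled digraph `(V, F, k)`:
`(A_k)_{i,j} = k_{j→i}` if `(j→i) ∈ F`, `(A_k)_{i,i} = -∑_{(i→j)∈F} k_{i→j}`, and `0` otherwise. -/
noncomputable def LaplacianK [Fintype V] [DecidableEq V]
    (F : Finset (V × V)) (k : V × V → ℝ) : Matrix V V ℝ :=
  Matrix.of fun i j =>
    if i = j then -(∑ e ∈ F.filter (fun e => e.1 = i), k e)
    else if (j, i) ∈ F then k (j, i) else 0

/-- `T` is a directed spanning tree of the strongly connected digraph `E`, rooted at `i`
and directed towards the root: no directed cycle, and every vertex except `i`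
is the source of exactly one edge. -/
def IsSpanningTreeTo [DecidableEq V] (E : Finset (V × V)) (i : V)
    (T : Finset (V × V)) : Prop :=
  T ⊆ E ∧ ¬ HasDirectedCycle T ∧
    ∀ j : V, j ≠ i → (T.filter (fun e => e.1 = j)).card = 1

open scoped Classical in
/-- The tree constant `(K_k)_i = ∑_{T ∈ T_i} ∏_{(j→j')∈T} k_{j→j'}`. -/
noncomputable def treeConst [Fintype V] [DecidableEq V]
    (E : Finset (V × V)) (k : V × V → ℝ) (i : V) : ℝ :=
  ∑ T ∈ E.powerset.filter (fun T => IsSpanningTreeTo E i T), ∏ e ∈ T, k e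

/-- The incidence matrix of the digraph with edge set `F`: in the column of edge `(j→j')`,
entry `-1` in row `j`, entry `+1` in row `j'`, and `0` elsewhere. -/
noncomputable def incidence [DecidableEq V] (F : Finset (V × V)) :
    Matrix V {e : V × V // e ∈ F} ℝ :=
  Matrix.of fun i e =>
    (if (e : V × V).2 = i then (1 : ℝ) else 0) - (if (e : V × V).1 = i then (1 : ℝ) else 0)

/-- Every connected component of the digraph is strongly connected: whenever `j` is reachable
from `i` in the underlying undirected graph, it is reachable by a directed path. -/
def WeaklyReversible {V : Type*} (F : Finset (V × V)) : Prop :=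
  ∀ i j : V, uReach F i j → dReach F i j

/-- The underlying undirected simple graph of the digraph with edge set `F`. -/
def toSimpleGraph {V : Type*} (F : Finset (V × V)) : SimpleGraph V :=
  SimpleGraph.fromRel fun a b => (a, b) ∈ F

/-- `F` is an auxiliary digraph for the digraph `E`: its connected components are directed
trees on the vertex sets of the connected components of `E`. That is, `F` has no self-loops
and no pair of opposite edges, its underlying undirected graph is acyclic (a forest), and
its connected components coincide with those of `E`. -/
def IsAuxiliary {V : Type*} (E F : Finset (V × V)) : Prop :=
  NoSelfLoops F ∧ (∀ a b : V, (a, b) ∈ F → (b, a) ∉ F) ∧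
    (toSimpleGraph F).IsAcyclic ∧ (∀ i j : V, uReach F i j ↔ uReach E i j)

/-- `F` is a chain graph for `E`: an auxiliary digraph each of whose components is a chain
`i_1 → i_2 → … → i_m` on the corresponding component of `E`; equivalently, an auxiliary
digraph in which every vertex has out-degree at most one and in-degree at most one. -/
def IsChainGraphOn {V : Type*} [DecidableEq V] (E F : Finset (V × V)) : Prop :=
  IsAuxiliary E F ∧ (∀ v : V, (F.filter (fun e => e.1 = v)).card ≤ 1) ∧
    (∀ v : V, (F.filter (fun e => e.2 = v)).card ≤ 1)

/-- `F` is a star graph for `E`: an auxiliary digraph each of whose components is a star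
`i_1 → i_m, …, i_{m-1} → i_m` on the corresponding component of `E`; equivalently, an
auxiliary digraph in which all edges of one component share the same target (the root). -/
def IsStarGraphOn {V : Type*} (E F : Finset (V × V)) : Prop :=
  IsAuxiliary E F ∧ ∀ e ∈ F, ∀ e' ∈ F, uReach F e.2 e'.2 → e.2 = e'.2

/-- `T` is a directed spanning tree, rooted at `i` and directed towards the root, of the
connected component of `i` in the digraph `E`: no directed cycle, every vertex of the
component except `i` is the source of exactly one edge, and vertices outside the component
are sources of no edge. -/
def IsCompSpanningTreeTo {V : Type*} [DecidableEq V] (E : Finset (V × V)) (i : V)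
    (T : Finset (V × V)) : Prop :=
  T ⊆ E ∧ ¬ HasDirectedCycle T ∧
    (∀ j : V, j ≠ i → uReach E j i → (T.filter (fun e => e.1 = j)).card = 1) ∧
    (∀ j : V, ¬ uReach E j i → (T.filter (fun e => e.1 = j)).card = 0)

open scoped Classical in
/-- The tree constants, given componentwise: on each component `V^λ`,
`(K_k)_i = ∑_{T ∈ T_i} ∏_{(j→j')∈T} k_{j→j'}` with `T_i` the set of directed spanning trees
of the component rooted at `i`, directed towards the root. -/
noncomputable def treeConstM {V : Type*} [Fintype V] [DecidableEq V]
    (E : Finset (V × V)) (k : V × V → ℝ) (i : V) : ℝ :=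
  ∑ T ∈ E.powerset.filter (fun T => IsCompSpanningTreeTo E i T), ∏ e ∈ T, k e

/-- The (generalized) monomial `x^{y(i)} = ∏_j x_j^{(y(i))_j}` (real exponentiation). -/
noncomputable def monomial {V : Type*} [Fintype V] {n : ℕ}
    (y : V → Fin n → ℝ) (x : Fin n → ℝ) (i : V) : ℝ :=
  ∏ j : Fin n, x j ^ y i j

/-- The matrix `Y ∈ ℝ^{n × V}` whose columns are the complexes `y(i)`. -/
noncomputable def complexMatrix {V : Type*} {n : ℕ} (y : V → Fin n → ℝ) :
    Matrix (Fin n) V ℝ :=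
  Matrix.of fun j i => y i j

/-- The mass-action vector field `f_k(x) = Y A_k x^Y`. -/
noncomputable def massActionField {V : Type*} [Fintype V] [DecidableEq V] {n : ℕ}
    (E : Finset (V × V)) (k : V × V → ℝ) (y : V → Fin n → ℝ) (x : Fin n → ℝ) :
    Fin n → ℝ :=
  (complexMatrix y).mulVec ((LaplacianK E k).mulVec (monomial y x))

/-!
The vector `K_k` of tree constants lies in the kernel of `A_k` (Markov chain tree theorem):
exchanging an edge `j → i` with the tree edge leaving `i` is a weight-preserving bijection
between pairs (edge into `i`, spanning tree rooted at its source) and pairs (edge out of `i`,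
spanning tree rooted at `i`). Weak reversibility makes every `(K_k)_i` positive, and a strong
minimum principle for `ψ - c K_k` shows that every `ψ ∈ ker A_k` is a multiple of `K_k` on each
component. Hence `A_k x^Y = 0` iff `x^Y / K_k` is constant on the components of `G`, which are
those of `G_ℰ`, i.e. iff it takes equal values at both ends of every edge of `ℰ`.
-/

open Relation

section Reachability

variable {F S : Finset (V × V)} {a b : V}

theorem uReach_symm (h : uReach F a b) : uReach F b a := by
  induction h with
  | refl => exact .refl
  | tail _ hbc ih => exact .head hbc.symm ih

theorem uReach_of_mem (h : (a, b) ∈ F) : uReach F a b :=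
  .single (.inl h)

theorem dReach.to_uReach (h : dReach F a b) : uReach F a b :=
  ReflTransGen.mono (fun _ _ => .inl) _ _ h

theorem dReach_mono (hFS : F ⊆ S) (h : dReach F a b) : dReach S a b :=
  ReflTransGen.mono (fun _ _ h => hFS h) _ _ h

theorem HasDirectedCycle.mono (hFS : F ⊆ S) : HasDirectedCycle F → HasDirectedCycle S
  | ⟨v, hv⟩ => ⟨v, TransGen.mono (fun _ _ h => hFS h) _ _ hv⟩

theorem not_hasDirectedCycle_of_lt {d : V → ℕ} (hd : ∀ e ∈ F, d e.2 < d e.1) :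
    ¬ HasDirectedCycle F := by
  rintro ⟨v, hv⟩
  have hlt : ∀ a b, TransGen (fun a b => (a, b) ∈ F) a b → d b < d a := by
    intro a b hab
    induction hab with
    | single h => exact hd _ h
    | tail _ h ih => exact (hd _ h).trans ih
  exact (hlt v v hv).false

theorem hasDirectedCycle_of_forall_exists [Finite V] {P : V → Prop} {v₀ : V} (h₀ : P v₀)
    (hstep : ∀ v, P v → ∃ w, (v, w) ∈ F ∧ P w) : HasDirectedCycle F := by
  choose s hs using fun v : Subtype P => hstep v v.2
  let next : Subtype P → Subtype P := fun v => ⟨s v, (hs v).2⟩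
  let x : ℕ → Subtype P := fun n => next^[n] ⟨v₀, h₀⟩
  have hpath : ∀ ⦃m n⦄, m < n → TransGen (fun a b => (a, b) ∈ F) (x m) (x n) :=
    Nat.rel_of_forall_rel_succ_of_lt (fun a b : Subtype P => TransGen (fun a b => (a, b) ∈ F) a b)
      fun n => .single <| by
        simp only [x, Function.iterate_succ_apply']
        exact (hs _).1
  obtain ⟨m, n, hmn, hx⟩ := Finite.exists_ne_map_eq_of_infinite x
  rcases hmn.lt_or_gt with h | h
  · have hcyc := hpath h
    rw [← hx] at hcyc
    exact ⟨_, hcyc⟩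
  · have hcyc := hpath h
    rw [hx] at hcyc
    exact ⟨_, hcyc⟩

theorem forall_uReach_imp_eq_iff {β : Type*} (r : V → β) :
    (∀ a b, uReach F a b → r a = r b) ↔ ∀ e ∈ F, r e.2 = r e.1 := by
  refine ⟨fun h e he => (h e.1 e.2 (uReach_of_mem he)).symm, fun h a b hab => ?_⟩
  induction hab with
  | refl => rfl
  | tail _ hbc ih => exact ih.trans (hbc.elim (fun hbc => (h _ hbc).symm) (h _))

variable [DecidableEq V]

theorem dReach_insert {e : V × V} (h : dReach (insert e F) a b) :
    dReach F a b ∨ dReach F a e.1 ∧ dReach F e.2 b := by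
  induction h using ReflTransGen.head_induction_on with
  | refl => exact .inl .refl
  | head hstep _ ih =>
    rcases Finset.mem_insert.1 hstep with rfl | hstep
    · exact .inr ⟨.refl, ih.elim id And.right⟩
    · exact ih.imp (ReflTransGen.head hstep) (And.imp_left (ReflTransGen.head hstep))

theorem dReach_erase_of_dReach {e : V × V} (he : e ∈ F) (h : dReach F e.2 b) :
    dReach (F.erase e) e.2 b := by
  rw [← Finset.insert_erase he] at h
  exact (dReach_insert h).elim id And.right

theorem HasDirectedCycle.of_insert {e : V × V} (h : HasDirectedCycle (insert e F)) :
    HasDirectedCycle F ∨ dReach F e.2 e.1 := by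
  obtain ⟨v, hv⟩ := h
  obtain ⟨w, hvw, hwv⟩ := TransGen.head'_iff.1 hv
  rcases Finset.mem_insert.1 hvw with rfl | hvw
  · exact .inr ((dReach_insert hwv).elim id And.left)
  · rcases dReach_insert hwv with hwv | ⟨hwe, hev⟩
    · exact .inl ⟨v, TransGen.head' hvw hwv⟩
    · exact .inr (hev.tail hvw |>.trans hwe)

theorem eq_of_card_filter_fst_le_one {v w w' : V} (h : (F.filter (·.1 = v)).card ≤ 1)
    (hw : (v, w) ∈ F) (hw' : (v, w') ∈ F) : w = w' :=
  (Prod.ext_iff.1 (Finset.card_le_one.1 h (v, w) (by simp [hw]) (v, w') (by simp [hw']))).2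

theorem filter_fst_insert_erase {e f : V × V} {v : V} (he : e.1 ≠ v) (hf : f.1 ≠ v) :
    (insert e (F.erase f)).filter (·.1 = v) = F.filter (·.1 = v) := by
  rw [Finset.filter_insert, if_neg he, Finset.filter_erase]
  exact Finset.erase_eq_of_notMem fun h => hf (Finset.mem_filter.1 h).2

theorem dReach_total_of_card_filter_fst_le_one (hF : ∀ v, (F.filter (·.1 = v)).card ≤ 1)
    {c : V} (hab : dReach F a b) (hac : dReach F a c) : dReach F b c ∨ dReach F c b := by
  induction hab using ReflTransGen.head_induction_on with
  | refl => exact .inl hac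
  | head hstep hrest ih =>
    rcases ReflTransGen.cases_head hac with rfl | ⟨x, hx, hxc⟩
    · exact .inr (hrest.head hstep)
    · exact ih (eq_of_card_filter_fst_le_one (hF _) hx hstep ▸ hxc)

end Reachability

namespace IsCompSpanningTreeTo

variable [DecidableEq V] {E T : Finset (V × V)} {i a b v : V}

theorem uReach_fst (hT : IsCompSpanningTreeTo E i T) (hab : (a, b) ∈ T) : uReach E a i := by
  by_contra h
  have hmem : (a, b) ∈ T.filter (·.1 = a) := Finset.mem_filter.2 ⟨hab, rfl⟩
  simp [Finset.card_eq_zero.1 (hT.2.2.2 a h)] at hmem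

theorem uReach_snd (hT : IsCompSpanningTreeTo E i T) (hab : (a, b) ∈ T) : uReach E b i :=
  (uReach_symm (uReach_of_mem (hT.1 hab))).trans (hT.uReach_fst hab)

theorem exists_mem_of_ne (hT : IsCompSpanningTreeTo E i T) (hv : uReach E v i) (hvi : v ≠ i) :
    ∃ w, (v, w) ∈ T := by
  obtain ⟨e, he⟩ := Finset.card_eq_one.1 (hT.2.2.1 v hvi hv)
  obtain ⟨heT, rfl⟩ := Finset.mem_filter.1 (he ▸ Finset.mem_singleton_self e)
  exact ⟨e.2, heT⟩

variable [Finite V]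

/-- Following out-edges from the root would never stop inside the component, closing a cycle. -/
theorem root_notMem (hT : IsCompSpanningTreeTo E i T) (w : V) : (i, w) ∉ T := by
  intro hiw
  refine hT.2.1 (hasDirectedCycle_of_forall_exists (P := (uReach E · i)) .refl fun v hv => ?_)
  obtain ⟨w', hw'⟩ : ∃ w', (v, w') ∈ T := by
    by_cases hvi : v = i
    · exact ⟨w, hvi ▸ hiw⟩
    · exact hT.exists_mem_of_ne hv hvi
  exact ⟨w', hw', hT.uReach_snd hw'⟩

theorem card_filter_fst_le_one (hT : IsCompSpanningTreeTo E i T) (v : V) :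
    (T.filter (·.1 = v)).card ≤ 1 := by
  by_cases hvi : v = i
  · subst hvi
    refine Finset.card_le_one.2 fun ⟨x, y⟩ he _ _ => ?_
    obtain ⟨heT, rfl⟩ := Finset.mem_filter.1 he
    exact absurd heT (hT.root_notMem y)
  by_cases hv : uReach E v i
  · exact (hT.2.2.1 v hvi hv).le
  · simp [hT.2.2.2 v hv]

theorem dReach_root (hT : IsCompSpanningTreeTo E i T) (hv : uReach E v i) : dReach T v i := by
  by_contra hvT
  refine hT.2.1 (hasDirectedCycle_of_forall_exists (P := fun v => uReach E v i ∧ ¬ dReach T v i)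
    ⟨hv, hvT⟩ fun v ⟨hv, hvT⟩ => ?_)
  obtain ⟨w, hw⟩ := hT.exists_mem_of_ne hv (by rintro rfl; exact hvT .refl)
  exact ⟨w, hw, hT.uReach_snd hw, fun hwT => hvT (hwT.head hw)⟩

theorem eq_root_of_dReach (hT : IsCompSpanningTreeTo E i T) (h : dReach T i b) : b = i := by
  rcases ReflTransGen.cases_head h with rfl | ⟨w, hw, -⟩
  · rfl
  · exact absurd hw (hT.root_notMem w)

theorem eq_of_dReach_of_mem (hT : IsCompSpanningTreeTo E i T) {l a a' : V} (ha : (a, i) ∈ T)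
    (ha' : (a', i) ∈ T) (hla : dReach T l a) (hla' : dReach T l a') : a = a' := by
  have key : ∀ {a a'}, (a, i) ∈ T → (a', i) ∈ T → dReach T a a' → a = a' := by
    intro a a' ha ha' haa'
    rcases ReflTransGen.cases_head haa' with h | ⟨w, hw, hwa'⟩
    · exact h
    · rw [eq_of_card_filter_fst_le_one (hT.card_filter_fst_le_one a) hw ha] at hwa'
      exact absurd (hT.eq_root_of_dReach hwa' ▸ ha') (hT.root_notMem i)
  rcases dReach_total_of_card_filter_fst_le_one hT.card_filter_fst_le_one hla hla' with h | h
  · exact key ha ha' h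
  · exact (key ha' ha h).symm

theorem exists_mem_snd_root (hT : IsCompSpanningTreeTo E i T) {l : V} (hl : uReach E l i)
    (hli : l ≠ i) : ∃ a, (a, i) ∈ T ∧ dReach T l a := by
  rcases ReflTransGen.cases_tail (hT.dReach_root hl) with h | ⟨a, hla, hai⟩
  · exact absurd h.symm hli
  · exact ⟨a, hai, hla⟩

end IsCompSpanningTreeTo

section SpanningTreeExistence

variable {E : Finset (V × V)} {i : V}

def ReachIn (E : Finset (V × V)) (i : V) : ℕ → V → Prop
  | 0, v => v = i
  | n + 1, v => ∃ w, (v, w) ∈ E ∧ ReachIn E i n w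

theorem exists_reachIn_of_dReach {v : V} (h : dReach E v i) : ∃ n, ReachIn E i n v := by
  induction h using ReflTransGen.head_induction_on with
  | refl => exact ⟨0, rfl⟩
  | head hstep _ ih =>
    obtain ⟨n, hn⟩ := ih
    exact ⟨n + 1, _, hstep, hn⟩

variable [DecidableEq V]

theorem isCompSpanningTreeTo_of_forall_mem_iff {T : Finset (V × V)} {s : V → V} {d : V → ℕ}
    (hs : ∀ v, uReach E v i → v ≠ i → (v, s v) ∈ E ∧ d (s v) < d v)
    (hT : ∀ a b, (a, b) ∈ T ↔ (uReach E a i ∧ a ≠ i) ∧ s a = b) :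
    IsCompSpanningTreeTo E i T := by
  refine ⟨fun ⟨a, b⟩ h => ?_, not_hasDirectedCycle_of_lt (d := d) fun ⟨a, b⟩ h => ?_,
    fun j hji hj => Finset.card_eq_one.2 ⟨(j, s j), ?_⟩, fun j hj => ?_⟩
  · obtain ⟨⟨ha, hai⟩, rfl⟩ := (hT a b).1 h
    exact (hs a ha hai).1
  · obtain ⟨⟨ha, hai⟩, rfl⟩ := (hT a b).1 h
    exact (hs a ha hai).2
  · ext ⟨a, b⟩
    simp only [Finset.mem_filter, hT, Finset.mem_singleton, Prod.mk.injEq]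
    constructor
    · rintro ⟨⟨-, rfl⟩, rfl⟩
      exact ⟨rfl, rfl⟩
    · rintro ⟨rfl, rfl⟩
      exact ⟨⟨⟨hj, hji⟩, rfl⟩, rfl⟩
  · refine Finset.card_eq_zero.2 (Finset.filter_eq_empty_iff.2 fun ⟨a, b⟩ h hab => ?_)
    exact hj (hab ▸ ((hT a b).1 h).1.1)

variable [Fintype V]

/-- Breadth-first search: every vertex steps to a neighbour closer to the root. -/
theorem exists_isCompSpanningTreeTo (hwr : WeaklyReversible E) (i : V) :
    ∃ T, IsCompSpanningTreeTo E i T := by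
  classical
  let d : V → ℕ := fun v => if h : ∃ n, ReachIn E i n v then Nat.find h else 0
  have hstep : ∀ v, ∃ w, uReach E v i → v ≠ i → (v, w) ∈ E ∧ d w < d v := by
    intro v
    by_cases hv : uReach E v i ∧ v ≠ i
    · have h := exists_reachIn_of_dReach (hwr v i hv.1)
      have hspec : ReachIn E i (d v) v := by simpa only [d, dif_pos h] using Nat.find_spec h
      obtain ⟨m, hm⟩ : ∃ m, d v = m + 1 :=
        Nat.exists_eq_add_one.2 (Nat.pos_of_ne_zero fun h0 => hv.2 (by rwa [h0] at hspec))
      rw [hm] at hspec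
      obtain ⟨w, hvw, hw⟩ := hspec
      have hdw : d w ≤ m := by
        have hw' : ∃ n, ReachIn E i n w := ⟨m, hw⟩
        simpa only [d, dif_pos hw'] using Nat.find_min' hw' hw
      exact ⟨w, fun _ _ => ⟨hvw, by omega⟩⟩
    · exact ⟨v, fun h hvi => absurd ⟨h, hvi⟩ hv⟩
  choose s hs using hstep
  exact ⟨(Finset.univ.filter fun v => uReach E v i ∧ v ≠ i).image fun v => (v, s v),
    isCompSpanningTreeTo_of_forall_mem_iff hs fun a b => by simp⟩

theorem treeConstM_pos {k : V × V → ℝ} (hk : ∀ e ∈ E, 0 < k e) (hwr : WeaklyReversible E)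
    (i : V) : 0 < treeConstM E k i := by
  classical
  obtain ⟨T, hT⟩ := exists_isCompSpanningTreeTo hwr i
  refine Finset.sum_pos (fun T' hT' => Finset.prod_pos fun e he => hk e ?_) ⟨T, ?_⟩
  · exact Finset.mem_powerset.1 (Finset.mem_filter.1 hT').1 he
  · exact Finset.mem_filter.2 ⟨Finset.mem_powerset.2 hT.1, hT⟩

end SpanningTreeExistence

namespace IsCompSpanningTreeTo

variable [DecidableEq V] [Finite V] {E T : Finset (V × V)} {i j l r s t t' : V}

theorem exchange (hT : IsCompSpanningTreeTo E r T) (hst : (s, t) ∈ T) (hrt : (r, t') ∈ E)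
    (hcyc : ¬ HasDirectedCycle (insert (r, t') (T.erase (s, t)))) :
    IsCompSpanningTreeTo E s (insert (r, t') (T.erase (s, t))) := by
  have hsr : uReach E s r := hT.uReach_fst hst
  refine ⟨Finset.insert_subset hrt ((Finset.erase_subset _ _).trans hT.1), hcyc,
    fun v hvs hv => ?_, fun v hv => ?_⟩
  · by_cases hvr : v = r
    · subst hvr
      refine Finset.card_eq_one.2
        ⟨(v, t'), Finset.eq_singleton_iff_unique_mem.2 ⟨by simp, ?_⟩⟩
      rintro ⟨a, b⟩ hab
      simp only [Finset.mem_filter, Finset.mem_insert, Finset.mem_erase] at hab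
      obtain ⟨hab | ⟨-, hab⟩, rfl⟩ := hab
      · exact hab
      · exact absurd hab (hT.root_notMem b)
    · rw [filter_fst_insert_erase (Ne.symm hvr) (Ne.symm hvs)]
      exact hT.2.2.1 v hvr (hv.trans hsr)
  · have hvr : r ≠ v := fun h => hv (h ▸ uReach_symm hsr)
    have hvs : s ≠ v := fun h => hv (h ▸ .refl)
    rw [filter_fst_insert_erase hvr hvs]
    exact hT.2.2.2 v fun h => hv (h.trans (uReach_symm hsr))

theorem rotate_to_root (hji : (j, i) ∈ E) (hT : IsCompSpanningTreeTo E j T) (hil : (i, l) ∈ T) :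
    IsCompSpanningTreeTo E i (insert (j, i) (T.erase (i, l))) := by
  refine hT.exchange hil hji fun hcyc => ?_
  rcases hcyc.of_insert with hcyc | hij
  · exact hT.2.1 (hcyc.mono (Finset.erase_subset _ _))
  rcases ReflTransGen.cases_head hij with hij | ⟨x, hix, -⟩
  · obtain rfl : i = j := hij
    exact hT.root_notMem l hil
  · have hix' := Finset.mem_erase.1 hix
    obtain rfl := eq_of_card_filter_fst_le_one (hT.card_filter_fst_le_one i) hix'.2 hil
    exact hix'.1 rfl

theorem rotate_from_root (hloop : NoSelfLoops E) (hil : (i, l) ∈ E)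
    (hT : IsCompSpanningTreeTo E i T) (hji : (j, i) ∈ T) (hlj : dReach T l j) :
    IsCompSpanningTreeTo E j (insert (i, l) (T.erase (j, i))) := by
  refine hT.exchange hji hil fun hcyc => ?_
  rcases hcyc.of_insert with hcyc | hli
  · exact hT.2.1 (hcyc.mono (Finset.erase_subset _ _))
  rcases ReflTransGen.cases_tail hli with h | ⟨a, hla, hai⟩
  · exact hloop _ hil h
  · obtain ⟨haj, hai⟩ := Finset.mem_erase.1 hai
    rw [hT.eq_of_dReach_of_mem hai hji (dReach_mono (Finset.erase_subset _ _) hla) hlj] at haj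
    exact haj rfl

end IsCompSpanningTreeTo

section MarkovChainTree

variable {E T : Finset (V × V)} {i j l a v w : V}

open Classical in
/-- Junk value `v` when `T` has no edge out of `v`. -/
noncomputable def outNbr (T : Finset (V × V)) (v : V) : V :=
  if h : ∃ w, (v, w) ∈ T then h.choose else v

open Classical in
/-- Junk value `l` when no `T`-path from `l` enters `i`. -/
noncomputable def enterNbr (T : Finset (V × V)) (i l : V) : V :=
  if h : ∃ a, (a, i) ∈ T ∧ dReach T l a then h.choose else l

theorem outNbr_mem (h : (v, w) ∈ T) : (v, outNbr T v) ∈ T := by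
  have h' : ∃ w, (v, w) ∈ T := ⟨w, h⟩
  rw [outNbr, dif_pos h']
  exact h'.choose_spec

theorem enterNbr_spec (ha : (a, i) ∈ T) (hla : dReach T l a) :
    (enterNbr T i l, i) ∈ T ∧ dReach T l (enterNbr T i l) := by
  have h : ∃ a, (a, i) ∈ T ∧ dReach T l a := ⟨a, ha, hla⟩
  rw [enterNbr, dif_pos h]
  exact h.choose_spec

theorem mul_prod_eq_mul_prod_insert_erase {α M : Type*} [CommMonoid M] [DecidableEq α]
    {s : Finset α} {a b : α} (f : α → M) (hb : b ∈ s) (ha : a ∉ s) :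
    f a * ∏ x ∈ s, f x = f b * ∏ x ∈ insert a (s.erase b), f x := by
  rw [Finset.prod_insert fun h => ha (Finset.mem_of_mem_erase h), ← Finset.mul_prod_erase s f hb,
    mul_left_comm]

variable [DecidableEq V]

theorem outNbr_eq (hT : (T.filter (·.1 = v)).card ≤ 1) (h : (v, w) ∈ T) : outNbr T v = w :=
  eq_of_card_filter_fst_le_one hT (outNbr_mem h) h

namespace IsCompSpanningTreeTo

theorem outNbr_mem_of_mem (hloop : NoSelfLoops E) (hji : (j, i) ∈ E)
    (hT : IsCompSpanningTreeTo E j T) : (i, outNbr T i) ∈ T := by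
  obtain ⟨l, hil⟩ := hT.exists_mem_of_ne (uReach_symm (uReach_of_mem hji)) (hloop _ hji).symm
  exact outNbr_mem hil

variable [Finite V]

theorem enterNbr_eq (hT : IsCompSpanningTreeTo E i T) (ha : (a, i) ∈ T) (hla : dReach T l a) :
    enterNbr T i l = a :=
  hT.eq_of_dReach_of_mem (enterNbr_spec ha hla).1 ha (enterNbr_spec ha hla).2 hla

theorem enterNbr_mem_of_mem (hloop : NoSelfLoops E) (hil : (i, l) ∈ E)
    (hT : IsCompSpanningTreeTo E i T) :
    (enterNbr T i l, i) ∈ T ∧ dReach T l (enterNbr T i l) := by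
  obtain ⟨a, hai, hla⟩ :=
    hT.exists_mem_snd_root (uReach_symm (uReach_of_mem hil)) (hloop _ hil).symm
  exact enterNbr_spec hai hla

theorem enterNbr_rotate_to_root (hji : (j, i) ∈ E) (hT : IsCompSpanningTreeTo E j T)
    (hil : (i, l) ∈ T) : enterNbr (insert (j, i) (T.erase (i, l))) i l = j :=
  (hT.rotate_to_root hji hil).enterNbr_eq (Finset.mem_insert_self _ _)
    (dReach_mono (Finset.subset_insert _ _)
      (dReach_erase_of_dReach hil (hT.dReach_root (hT.uReach_snd hil))))

theorem outNbr_rotate_from_root (hloop : NoSelfLoops E) (hil : (i, l) ∈ E)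
    (hT : IsCompSpanningTreeTo E i T) (hji : (j, i) ∈ T) (hlj : dReach T l j) :
    outNbr (insert (i, l) (T.erase (j, i))) i = l :=
  outNbr_eq ((hT.rotate_from_root hloop hil hji hlj).card_filter_fst_le_one i)
    (Finset.mem_insert_self _ _)

end IsCompSpanningTreeTo

open Classical in
noncomputable def edgeTreePairs (E s : Finset (V × V)) (r : V × V → V) :
    Finset ((V × V) × Finset (V × V)) :=
  (s ×ˢ E.powerset).filter fun p => IsCompSpanningTreeTo E (r p.1) p.2

theorem mem_edgeTreePairs {s : Finset (V × V)} {r : V × V → V} {e : V × V} :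
    (e, T) ∈ edgeTreePairs E s r ↔ e ∈ s ∧ IsCompSpanningTreeTo E (r e) T := by
  simp only [edgeTreePairs, Finset.mem_filter, Finset.mem_product, Finset.mem_powerset]
  exact ⟨fun ⟨⟨he, _⟩, hT⟩ => ⟨he, hT⟩,
    fun ⟨he, hT⟩ => ⟨⟨he, hT.1⟩, hT⟩⟩

variable [Fintype V]

theorem sum_mul_treeConstM (k : V × V → ℝ) (s : Finset (V × V)) (r : V × V → V) :
    ∑ e ∈ s, k e * treeConstM E k (r e) =
      ∑ p ∈ edgeTreePairs E s r, k p.1 * ∏ e ∈ p.2, k e := by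
  rw [edgeTreePairs, Finset.sum_filter, Finset.sum_product]
  refine Finset.sum_congr rfl fun e _ => ?_
  rw [treeConstM, Finset.sum_filter, Finset.mul_sum]
  simp only [mul_ite, mul_zero]

/-- The combinatorial heart of the Markov chain tree theorem. The bijection exchanges the edge
`j → i` with the tree edge out of `i`; its inverse exchanges the edge `i → l` with the tree edge
through which the path from `l` enters the root `i`. -/
theorem sum_edgeTreePairs_into_eq_out (hloop : NoSelfLoops E) (k : V × V → ℝ) (i : V) :
    ∑ p ∈ edgeTreePairs E (E.filter (·.2 = i)) Prod.fst, k p.1 * ∏ e ∈ p.2, k e =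
      ∑ p ∈ edgeTreePairs E (E.filter (·.1 = i)) fun _ => i, k p.1 * ∏ e ∈ p.2, k e := by
  refine Finset.sum_nbij' (fun p => ((i, outNbr p.2 i), insert p.1 (p.2.erase (i, outNbr p.2 i))))
    (fun q => ((enterNbr q.2 i q.1.2, i), insert q.1 (q.2.erase (enterNbr q.2 i q.1.2, i))))
    ?_ ?_ ?_ ?_ ?_ <;> rintro ⟨⟨a, b⟩, T⟩ hp <;>
    obtain ⟨hmem, hT⟩ := mem_edgeTreePairs.1 hp <;> obtain ⟨hab, rfl⟩ := Finset.mem_filter.1 hmem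
  · have hil := hT.outNbr_mem_of_mem hloop hab
    exact mem_edgeTreePairs.2 ⟨by simpa using hT.1 hil, hT.rotate_to_root hab hil⟩
  · obtain ⟨hai, hla⟩ := hT.enterNbr_mem_of_mem hloop hab
    exact mem_edgeTreePairs.2 ⟨by simpa using hT.1 hai, hT.rotate_from_root hloop hab hai hla⟩
  · have hil := hT.outNbr_mem_of_mem hloop hab
    simp only [hT.enterNbr_rotate_to_root hab hil, Finset.erase_insert fun h =>
      hT.root_notMem _ (Finset.mem_of_mem_erase h), Finset.insert_erase hil]
  · obtain ⟨hai, hla⟩ := hT.enterNbr_mem_of_mem hloop hab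
    simp only [hT.outNbr_rotate_from_root hloop hab hai hla, Finset.erase_insert fun h =>
      hT.root_notMem _ (Finset.mem_of_mem_erase h), Finset.insert_erase hai]
  · exact mul_prod_eq_mul_prod_insert_erase k (hT.outNbr_mem_of_mem hloop hab) (hT.root_notMem _)

/-- The Markov chain tree theorem, read off at the vertex `i`. -/
theorem sum_edge_into_mul_treeConstM (hloop : NoSelfLoops E) (k : V × V → ℝ) (i : V) :
    ∑ e ∈ E.filter (·.2 = i), k e * treeConstM E k e.1 =
      (∑ e ∈ E.filter (·.1 = i), k e) * treeConstM E k i := by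
  rw [Finset.sum_mul, sum_mul_treeConstM, sum_mul_treeConstM (r := fun _ => i)]
  exact sum_edgeTreePairs_into_eq_out hloop k i

end MarkovChainTree

section Laplacian

variable [Fintype V] [DecidableEq V] {E : Finset (V × V)} {k : V × V → ℝ}

theorem laplacianK_mulVec_apply (hloop : NoSelfLoops E) (ψ : V → ℝ) (i : V) :
    (LaplacianK E k *ᵥ ψ) i =
      ∑ e ∈ E.filter (·.2 = i), k e * ψ e.1 - (∑ e ∈ E.filter (·.1 = i), k e) * ψ i := by
  have hentry : ∀ j, LaplacianK E k i j = (if (j, i) ∈ E then k (j, i) else 0) -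
      if i = j then ∑ e ∈ E.filter (·.1 = i), k e else 0 := by
    intro j
    by_cases hij : i = j
    · subst hij
      simp [LaplacianK, show (i, i) ∉ E from fun h => hloop _ h rfl]
    · simp [LaplacianK, hij]
  simp only [Matrix.mulVec, dotProduct, hentry, sub_mul, Finset.sum_sub_distrib, ite_mul,
    zero_mul, Finset.sum_ite_eq, Finset.mem_univ, if_true, ← Finset.sum_filter]
  congr 1
  refine Finset.sum_nbij' (fun j => (j, i)) Prod.fst (by simp) (fun ⟨a, b⟩ h => ?_) (by simp)
    (fun e he => Prod.ext rfl (Finset.mem_filter.1 he).2.symm) (by simp)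
  obtain ⟨h, rfl⟩ := Finset.mem_filter.1 h
  simpa using h

theorem laplacianK_mulVec_treeConstM (hloop : NoSelfLoops E) :
    LaplacianK E k *ᵥ treeConstM E k = 0 := by
  funext i
  rw [laplacianK_mulVec_apply hloop, sum_edge_into_mul_treeConstM hloop, sub_self,
    Pi.zero_apply]

theorem eq_zero_of_laplacianK_mulVec_apply_eq_zero (hloop : NoSelfLoops E)
    (hk : ∀ e ∈ E, 0 < k e) {φ : V → ℝ} {c : V} (hAc : (LaplacianK E k *ᵥ φ) c = 0)
    (hc : φ c = 0) (hnn : ∀ e ∈ E, e.2 = c → 0 ≤ φ e.1) {a : V} (hac : (a, c) ∈ E) :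
    φ a = 0 := by
  rw [laplacianK_mulVec_apply hloop, hc, mul_zero, sub_zero] at hAc
  have hterm := (Finset.sum_eq_zero_iff_of_nonneg fun e he =>
    mul_nonneg (hk e (Finset.mem_filter.1 he).1).le
      (hnn e (Finset.mem_filter.1 he).1 (Finset.mem_filter.1 he).2)).1 hAc
  exact (mul_eq_zero.1 (hterm (a, c) (Finset.mem_filter.2 ⟨hac, rfl⟩))).resolve_left
    (hk _ hac).ne'

/-- Strong minimum principle: a harmonic function vanishing at a minimum vanishes on the whole
component, since weak reversibility joins every vertex to the minimum by a directed path. -/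
theorem eq_zero_of_laplacianK_mulVec_eq_zero (hloop : NoSelfLoops E) (hk : ∀ e ∈ E, 0 < k e)
    (hwr : WeaklyReversible E) {φ : V → ℝ} (hφ : LaplacianK E k *ᵥ φ = 0) {b : V}
    (hnn : ∀ v, uReach E v b → 0 ≤ φ v) (hb : φ b = 0) {a : V} (ha : uReach E a b) :
    φ a = 0 := by
  have hab := hwr a b ha
  clear ha
  induction hab using ReflTransGen.head_induction_on with
  | refl => exact hb
  | @head a c hac hcb ih =>
    refine eq_zero_of_laplacianK_mulVec_apply_eq_zero hloop hk (congrFun hφ c) ih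
      (fun e he hec => hnn _ ?_) hac
    exact (hec ▸ uReach_of_mem he : uReach E e.1 c).trans (dReach.to_uReach hcb)

theorem laplacianK_mulVec_eq_zero_iff (hloop : NoSelfLoops E) (hk : ∀ e ∈ E, 0 < k e)
    (hwr : WeaklyReversible E) (ψ : V → ℝ) :
    LaplacianK E k *ᵥ ψ = 0 ↔
      ∀ a b, uReach E a b → ψ a / treeConstM E k a = ψ b / treeConstM E k b := by
  have hK v : treeConstM E k v ≠ 0 := (treeConstM_pos hk hwr v).ne'
  constructor
  · classical
    intro hψ a b hab
    obtain ⟨v₀, hv₀, hmin⟩ := Finset.exists_min_image (Finset.univ.filter (uReach E · b))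
      (fun v => ψ v / treeConstM E k v) ⟨b, Finset.mem_filter.2 ⟨Finset.mem_univ b, .refl⟩⟩
    have hv₀b : uReach E v₀ b := (Finset.mem_filter.1 hv₀).2
    set c := ψ v₀ / treeConstM E k v₀
    have hratio v : ψ v / treeConstM E k v = c ↔ (ψ - c • treeConstM E k) v = 0 := by
      rw [div_eq_iff (hK v), Pi.sub_apply, Pi.smul_apply, smul_eq_mul, sub_eq_zero]
    have hφ : LaplacianK E k *ᵥ (ψ - c • treeConstM E k) = 0 := by
      rw [Matrix.mulVec_sub, Matrix.mulVec_smul, hψ, laplacianK_mulVec_treeConstM hloop,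
        smul_zero, sub_zero]
    have hnn v (hv : uReach E v v₀) : 0 ≤ (ψ - c • treeConstM E k) v := by
      have := (le_div_iff₀ (treeConstM_pos hk hwr v)).1
        (hmin v (Finset.mem_filter.2 ⟨Finset.mem_univ v, hv.trans hv₀b⟩))
      simp only [Pi.sub_apply, Pi.smul_apply, smul_eq_mul]
      linarith
    have hzero v (hv : uReach E v b) : ψ v / treeConstM E k v = c :=
      (hratio v).2 (eq_zero_of_laplacianK_mulVec_eq_zero hloop hk hwr hφ hnn
        ((hratio v₀).1 rfl) (hv.trans (uReach_symm hv₀b)))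
    rw [hzero a hab, hzero b .refl]
  · intro hψ
    funext v
    have hψw w (hw : uReach E w v) :
        ψ w = ψ v / treeConstM E k v * treeConstM E k w := by
      rw [← hψ w v hw, div_mul_cancel₀ _ (hK w)]
    have hsum : ∑ e ∈ E.filter (·.2 = v), k e * ψ e.1 =
        ψ v / treeConstM E k v * ∑ e ∈ E.filter (·.2 = v), k e * treeConstM E k e.1 := by
      rw [Finset.mul_sum]
      refine Finset.sum_congr rfl fun e he => ?_
      obtain ⟨heE, rfl⟩ := Finset.mem_filter.1 he
      rw [hψw e.1 (uReach_of_mem (a := e.1) (b := e.2) heE)]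
      ring
    rw [laplacianK_mulVec_apply hloop, hsum, sum_edge_into_mul_treeConstM hloop, Pi.zero_apply]
    field_simp [hK v]
    ring

end Laplacian

theorem complex_balanced_iff_binomials_general
    {V : Type*} [Fintype V] [DecidableEq V] {n : ℕ}
    (E : Finset (V × V)) (hloop : NoSelfLoops E)
    (k : V × V → ℝ) (hk : ∀ e ∈ E, 0 < k e)
    (y : V → Fin n → ℝ)
    (hwr : WeaklyReversible E)
    (F : Finset (V × V)) (hF : IsAuxiliary E F)
    (x : Fin n → ℝ) :
    (LaplacianK E k).mulVec (monomial y x) = 0 ↔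
      ∀ e ∈ F, monomial y x e.2 / treeConstM E k e.2 - monomial y x e.1 / treeConstM E k e.1 = 0 := by
  have hcomp a b : uReach E a b ↔ uReach F a b := (hF.2.2.2 a b).symm
  simp only [laplacianK_mulVec_eq_zero_iff hloop hk hwr, hcomp, sub_eq_zero]
  exact forall_uReach_imp_eq_iff fun v => monomial y x v / treeConstM E k v

/-- For a weakly reversible mass-action system `(G_k, y)` and an auxiliary digraph
`G_ℰ = (V,ℰ)`, a positive `x` is a complex-balanced equilibrium (`A_k x^Y = 0`) if and only
if it satisfies the binomial equations
`x^{y(i')}/(K_k)_{i'} - x^{y(i)}/(K_k)_i = 0` for all `(i→i') ∈ ℰ`. -/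
theorem complex_balanced_iff_binomials
    {V : Type*} [Fintype V] [DecidableEq V] {n : ℕ}
    (E : Finset (V × V)) (hloop : NoSelfLoops E)
    (k : V × V → ℝ) (hk : ∀ e ∈ E, 0 < k e)
    (y : V → Fin n → ℝ) (hyinj : Function.Injective y) (hynn : ∀ i j, 0 ≤ y i j)
    (hwr : WeaklyReversible E)
    (F : Finset (V × V)) (hF : IsAuxiliary E F)
    (x : Fin n → ℝ) (hx : ∀ j, 0 < x j) :
    (LaplacianK E k).mulVec (monomial y x) = 0 ↔
      ∀ e ∈ F, monomial y x e.2 / treeConstM E k e.2 - monomial y x e.1 / treeConstM E k e.1 = 0 :=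
  complex_balanced_iff_binomials_general E hloop k hk y hwr F hF x
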